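/- arXiv:2110.06576 — 4 statements merged into one kernel-verified Lean document; each statement's English description precedes it below -/
import Mathlib

section
/- Let N = 2, 2 < p < q < ∞, S ≤ 0. Then the extreme value μ̂^S := inf over u ∈ Σ\{0} of μ^S(u) = ((T(u)-2S)^{1/2}L(u)^{1/2} + (1/q)B(u)) / ((1/p)A(u)) is strictly positive. -/
open MeasureTheory

/-- Membership in `Σ = H¹(ℝ²) ∩ F(H¹)` (with the relevant integrabilities). -/
def InSigma (p q : ℝ) (u : EuclideanSpace ℝ (Fin 2) → ℂ) : Prop :=
  Differentiable ℝ u ∧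
  MemLp u 2 (volume : Measure (EuclideanSpace ℝ (Fin 2))) ∧
  Integrable (fun x : EuclideanSpace ℝ (Fin 2) => ‖fderiv ℝ u x‖ ^ 2) ∧
  Integrable (fun x : EuclideanSpace ℝ (Fin 2) => ‖x‖ ^ 2 * ‖u x‖ ^ 2) ∧
  Integrable (fun x : EuclideanSpace ℝ (Fin 2) => ‖u x‖ ^ p) ∧
  Integrable (fun x : EuclideanSpace ℝ (Fin 2) => ‖u x‖ ^ q)

noncomputable def Tfun (u : EuclideanSpace ℝ (Fin 2) → ℂ) : ℝ :=
  ∫ x : EuclideanSpace ℝ (Fin 2), ‖fderiv ℝ u x‖ ^ 2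

noncomputable def Lfun (u : EuclideanSpace ℝ (Fin 2) → ℂ) : ℝ :=
  ∫ x : EuclideanSpace ℝ (Fin 2), ‖x‖ ^ 2 * ‖u x‖ ^ 2

noncomputable def Afun (p : ℝ) (u : EuclideanSpace ℝ (Fin 2) → ℂ) : ℝ :=
  ∫ x : EuclideanSpace ℝ (Fin 2), ‖u x‖ ^ p

noncomputable def Bfun (q : ℝ) (u : EuclideanSpace ℝ (Fin 2) → ℂ) : ℝ :=
  ∫ x : EuclideanSpace ℝ (Fin 2), ‖u x‖ ^ q

/-- The nonlinear Rayleigh quotient `μ^S(u)`. -/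
noncomputable def muS (p q S : ℝ) (u : EuclideanSpace ℝ (Fin 2) → ℂ) : ℝ :=
  (Real.sqrt (Tfun u - 2 * S) * Real.sqrt (Lfun u) + (1 / q) * Bfun q u)
    / ((1 / p) * Afun p u)

/-!
Pointwise `t ^ p ≤ t ^ 2 + t ^ q`, so `A(u) ≤ ‖u‖₂² + B(u)`. The uncertainty principle
`‖u‖₂² ≤ 2 ‖x u‖₂ ‖∇u‖₂ ≤ 2 (T(u) - 2S)^{1/2} L(u)^{1/2}` then gives `A(u) ≤ q X + B(u)` with
`X = (T(u) - 2S)^{1/2} L(u)^{1/2}`, because `q > 2`; that is, `μ^S(u) ≥ p / q` for every `u ≠ 0`,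
and these values form a nonempty set (bump functions lie in `Σ`), so `μ̂^S ≥ p / q`.
The uncertainty principle is proved on the lines parallel to the first axis, where
`∫ |w|² = -∫ t (|w|²)'(t) dt` (the boundary terms vanish since `|w|²` is integrable),
followed by Cauchy–Schwarz.
-/

open Filter Topology Asymptotics

theorem tendsto_mul_atTop_zero_of_hasDerivAt {g g' : ℝ → ℝ} (hg : ∀ t, HasDerivAt g (g' t) t)
    (hgi : Integrable g) (hi : Integrable fun t => g t + t * g' t) :
    Tendsto (fun t => t * g t) atTop (𝓝 0) := by
  have hderiv : ∀ t, HasDerivAt (fun t => t * g t) (g t + t * g' t) t := fun t =>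
    ((hasDerivAt_id' t).mul (hg t)).congr_deriv (by simp)
  have hlim := tendsto_limUnder_of_hasDerivAt_of_integrableOn_Ioi (a := 0)
    (fun t _ => hderiv t) hi.integrableOn
  set ℓ := limUnder atTop (fun t => t * g t)
  suffices ℓ = 0 by rwa [this] at hlim
  by_contra hℓ
  -- otherwise `g t ~ ℓ / t` at infinity, and `t⁻¹` is not integrable there
  have hinv : (fun t : ℝ => t⁻¹) =O[atTop] g := by
    refine ((isBigO_refl g atTop).mul ((hlim.inv₀ hℓ).isBigO_one ℝ)).congr' ?_ (by simp)
    filter_upwards [hlim.eventually_ne hℓ] with t ht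
    rw [mul_inv, ← mul_assoc, mul_comm (g t), mul_assoc,
      mul_inv_cancel₀ (right_ne_zero_of_mul ht), mul_one]
  obtain ⟨s, hs, hint⟩ := hinv.integrableAtFilter
    measurable_inv.stronglyMeasurable.stronglyMeasurableAtFilter (hgi.integrableAtFilter atTop)
  obtain ⟨a, ha⟩ := mem_atTop_sets.mp hs
  exact not_integrableOn_Ici_inv (hint.mono_set ha)

theorem integral_eq_neg_integral_mul_deriv {g g' : ℝ → ℝ} (hg : ∀ t, HasDerivAt g (g' t) t)
    (hgi : Integrable g) (hi : Integrable fun t => t * g' t) :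
    ∫ t, g t = -∫ t, t * g' t := by
  have hsum : Integrable fun t => g t + t * g' t := hgi.add hi
  have hbot : Tendsto (fun t => t * g t) atBot (𝓝 0) := by
    have hneg : ∀ t, HasDerivAt (fun t => g (-t)) (-g' (-t)) t := fun t =>
      ((hg (-t)).comp t (hasDerivAt_neg t)).congr_deriv (mul_neg_one _)
    have h := tendsto_mul_atTop_zero_of_hasDerivAt hneg hgi.comp_neg
      (by simpa [neg_mul_comm] using hsum.comp_neg)
    simpa using (h.comp tendsto_neg_atBot_atTop).neg
  have htop := tendsto_mul_atTop_zero_of_hasDerivAt hg hgi hsum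
  have h := integral_of_hasDerivAt_of_tendsto
    (fun t => ((hasDerivAt_id' t).mul (hg t)).congr_deriv (by simp)) hsum hbot htop
  rw [integral_add hgi hi, sub_zero] at h
  linarith

theorem integral_norm_sq_le_two_mul_integral_abs_mul_norm_mul_norm_deriv {F : Type*}
    [NormedAddCommGroup F] [InnerProductSpace ℝ F] {w : ℝ → F} (hw : Differentiable ℝ w)
    (hw2 : Integrable fun t => ‖w t‖ ^ 2)
    (hi : Integrable fun t => |t| * ‖w t‖ * ‖deriv w t‖) :
    ∫ t, ‖w t‖ ^ 2 ≤ 2 * ∫ t, |t| * ‖w t‖ * ‖deriv w t‖ := by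
  set g : ℝ → ℝ := fun t => ‖w t‖ ^ 2
  have hg : ∀ t, HasDerivAt g (2 * inner ℝ (w t) (deriv w t)) t := fun t =>
    (hw t).hasDerivAt.norm_sq
  have hbound : ∀ t, ‖t * deriv g t‖ ≤ 2 * (|t| * ‖w t‖ * ‖deriv w t‖) := fun t => by
    rw [(hg t).deriv, norm_mul, norm_mul, Real.norm_eq_abs, Real.norm_two, Real.norm_eq_abs]
    have := abs_real_inner_le_norm (w t) (deriv w t)
    nlinarith [abs_nonneg t]
  have hi' : Integrable fun t => t * deriv g t :=
    (hi.const_mul 2).mono' (measurable_id.mul (measurable_deriv g)).aestronglyMeasurable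
      (Eventually.of_forall hbound)
  calc ∫ t, g t = -∫ t, t * deriv g t :=
        integral_eq_neg_integral_mul_deriv (fun t => (hg t).differentiableAt.hasDerivAt) hw2 hi'
    _ ≤ ∫ t, ‖t * deriv g t‖ := (neg_le_abs _).trans (abs_integral_le_integral_abs)
    _ ≤ ∫ t, 2 * (|t| * ‖w t‖ * ‖deriv w t‖) := integral_mono hi'.norm (hi.const_mul 2) hbound
    _ = 2 * ∫ t, |t| * ‖w t‖ * ‖deriv w t‖ := integral_const_mul _ _

namespace EuclideanSpace

noncomputable def consMeasurableEquiv (n : ℕ) :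
    ℝ × (Fin n → ℝ) ≃ᵐ EuclideanSpace ℝ (Fin (n + 1)) :=
  (MeasurableEquiv.piFinSuccAbove (fun _ => ℝ) 0).symm.trans (MeasurableEquiv.toLp 2 _)

theorem measurePreserving_consMeasurableEquiv (n : ℕ) :
    MeasurePreserving (consMeasurableEquiv n) (volume.prod volume) volume := by
  rw [← Measure.volume_eq_prod]
  exact (volume_preserving_symm_measurableEquiv_toLp _).symm.comp
    (volume_preserving_piFinSuccAbove (fun _ => ℝ) 0).symm

theorem hasDerivAt_consMeasurableEquiv {n : ℕ} (t : ℝ) (y : Fin n → ℝ) :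
    HasDerivAt (fun t => consMeasurableEquiv n (t, y)) (single 0 1) t := by
  have h : ∀ s, consMeasurableEquiv n (s, y) = consMeasurableEquiv n (0, y) + s • single 0 1 := by
    intro s
    ext i
    cases i using Fin.cases <;> simp [consMeasurableEquiv]
  rw [funext h]
  simpa using ((hasDerivAt_id t).smul_const (single (0 : Fin (n + 1)) (1 : ℝ))).const_add
    (consMeasurableEquiv n (0, y))

theorem abs_le_norm_consMeasurableEquiv {n : ℕ} (t : ℝ) (y : Fin n → ℝ) :
    |t| ≤ ‖consMeasurableEquiv n (t, y)‖ := by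
  simpa [consMeasurableEquiv] using PiLp.norm_apply_le (consMeasurableEquiv n (t, y)) 0

end EuclideanSpace

theorem integral_norm_sq_le_two_mul_integral_norm_mul_norm_mul_norm_fderiv {n : ℕ} {F : Type*}
    [NormedAddCommGroup F] [InnerProductSpace ℝ F] [CompleteSpace F]
    {u : EuclideanSpace ℝ (Fin (n + 1)) → F} (hu : Differentiable ℝ u)
    (hu2 : Integrable fun x => ‖u x‖ ^ 2)
    (hi : Integrable fun x => ‖x‖ * ‖u x‖ * ‖fderiv ℝ u x‖) :
    ∫ x, ‖u x‖ ^ 2 ≤ 2 * ∫ x, ‖x‖ * ‖u x‖ * ‖fderiv ℝ u x‖ := by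
  set e := EuclideanSpace.consMeasurableEquiv n
  have he := EuclideanSpace.measurePreserving_consMeasurableEquiv n
  have hu2' : Integrable (fun z => ‖u (e z)‖ ^ 2) (volume.prod volume) :=
    (he.integrable_comp_emb e.measurableEmbedding).mpr hu2
  have hi' : Integrable (fun z => ‖e z‖ * ‖u (e z)‖ * ‖fderiv ℝ u (e z)‖) (volume.prod volume) :=
    (he.integrable_comp_emb e.measurableEmbedding).mpr hi
  rw [← he.integral_comp e.measurableEmbedding, ← he.integral_comp e.measurableEmbedding,
    integral_prod_symm _ hu2', integral_prod_symm _ hi', ← integral_const_mul]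
  refine integral_mono_ae hu2'.integral_prod_right (hi'.integral_prod_right.const_mul 2) ?_
  filter_upwards [hu2'.prod_left_ae, hi'.prod_left_ae] with y hy2 hyi
  set w : ℝ → F := fun t => u (e (t, y))
  have hw : ∀ t, HasDerivAt w (fderiv ℝ u (e (t, y)) (EuclideanSpace.single 0 1)) t := fun t =>
    (hu _).hasFDerivAt.comp_hasDerivAt t (EuclideanSpace.hasDerivAt_consMeasurableEquiv t y)
  have hbound : ∀ t, |t| * ‖w t‖ * ‖deriv w t‖ ≤
      ‖e (t, y)‖ * ‖u (e (t, y))‖ * ‖fderiv ℝ u (e (t, y))‖ := fun t => by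
    rw [(hw t).deriv]
    gcongr
    · exact EuclideanSpace.abs_le_norm_consMeasurableEquiv t y
    · simpa using (fderiv ℝ u (e (t, y))).le_opNorm_of_le
        ((PiLp.norm_single 2 (fun _ : Fin (n + 1) => ℝ) 0 1).trans_le norm_one.le)
  have hwd : Differentiable ℝ w := fun t => (hw t).differentiableAt
  have hwi : Integrable fun t => |t| * ‖w t‖ * ‖deriv w t‖ :=
    hyi.mono' ((continuous_abs.mul hwd.continuous.norm).aestronglyMeasurable.mul
      (stronglyMeasurable_deriv w).norm.aestronglyMeasurable)
      (Eventually.of_forall fun t => by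
        rw [Real.norm_of_nonneg (by positivity)]; exact hbound t)
  calc ∫ t, ‖w t‖ ^ 2 ≤ 2 * ∫ t, |t| * ‖w t‖ * ‖deriv w t‖ :=
        integral_norm_sq_le_two_mul_integral_abs_mul_norm_mul_norm_deriv hwd hy2 hwi
    _ ≤ 2 * ∫ t, ‖e (t, y)‖ * ‖u (e (t, y))‖ * ‖fderiv ℝ u (e (t, y))‖ := by
        gcongr 2 * ?_
        exact integral_mono hwi hyi hbound

theorem integral_mul_le_sqrt_mul_sqrt_of_nonneg {α : Type*} [MeasurableSpace α] {μ : Measure α}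
    {f g : α → ℝ} (hf : 0 ≤ f) (hg : 0 ≤ g) (hf2 : MemLp f 2 μ) (hg2 : MemLp g 2 μ) :
    ∫ x, f x * g x ∂μ ≤ √(∫ x, f x ^ 2 ∂μ) * √(∫ x, g x ^ 2 ∂μ) := by
  have h := integral_mul_le_Lp_mul_Lq_of_nonneg Real.HolderConjugate.two_two
    (Eventually.of_forall hf) (Eventually.of_forall hg)
    (by rwa [ENNReal.ofReal_ofNat]) (by rwa [ENNReal.ofReal_ofNat])
  simpa only [Real.rpow_two, Real.sqrt_eq_rpow] using h

theorem integral_norm_sq_le_two_mul_sqrt_mul_sqrt {n : ℕ} {F : Type*}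
    [NormedAddCommGroup F] [InnerProductSpace ℝ F] [CompleteSpace F]
    {u : EuclideanSpace ℝ (Fin (n + 1)) → F} (hu : Differentiable ℝ u)
    (hu2 : Integrable fun x => ‖u x‖ ^ 2) (hL : Integrable fun x => ‖x‖ ^ 2 * ‖u x‖ ^ 2)
    (hT : Integrable fun x => ‖fderiv ℝ u x‖ ^ 2) :
    ∫ x, ‖u x‖ ^ 2 ≤ 2 * (√(∫ x, ‖x‖ ^ 2 * ‖u x‖ ^ 2) * √(∫ x, ‖fderiv ℝ u x‖ ^ 2)) := by
  have hxu : MemLp (fun x => ‖x‖ * ‖u x‖) 2 :=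
    (memLp_two_iff_integrable_sq (f := fun x => ‖x‖ * ‖u x‖)
      (continuous_norm.mul hu.continuous.norm).aestronglyMeasurable).mpr
      (by simpa only [mul_pow] using hL)
  have hDu : MemLp (fun x => ‖fderiv ℝ u x‖) 2 :=
    (memLp_two_iff_integrable_sq (measurable_fderiv ℝ u).norm.aestronglyMeasurable).mpr hT
  have hCS := integral_mul_le_sqrt_mul_sqrt_of_nonneg (fun _ => by positivity)
    (fun _ => norm_nonneg _) hxu hDu
  simp only [mul_pow] at hCS
  calc ∫ x, ‖u x‖ ^ 2 ≤ 2 * ∫ x, ‖x‖ * ‖u x‖ * ‖fderiv ℝ u x‖ :=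
        integral_norm_sq_le_two_mul_integral_norm_mul_norm_mul_norm_fderiv hu hu2
          (hxu.integrable_mul hDu)
    _ ≤ _ := mul_le_mul_of_nonneg_left hCS zero_le_two

theorem HasCompactSupport.inSigma {p q : ℝ} (hp : 0 < p) (hq : 0 < q)
    {u : EuclideanSpace ℝ (Fin 2) → ℂ} (hu : ContDiff ℝ 1 u) (hs : HasCompactSupport u) :
    InSigma p q u := by
  have hc := hu.continuous
  have hrpow : ∀ r : ℝ, 0 < r → Integrable fun x => ‖u x‖ ^ r := fun r hr =>
    (hc.norm.rpow_const fun _ => Or.inr hr.le).integrable_of_hasCompactSupport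
      (hs.comp_left (g := fun w : ℂ => ‖w‖ ^ r) (by simp [Real.zero_rpow hr.ne']))
  refine ⟨hu.differentiable one_ne_zero, hc.memLp_of_hasCompactSupport hs, ?_, ?_,
    hrpow p hp, hrpow q hq⟩
  · have hT : Continuous fun x => ‖fderiv ℝ u x‖ ^ 2 :=
      (hu.continuous_fderiv one_ne_zero).norm.pow 2
    exact hT.integrable_of_hasCompactSupport
      ((hs.fderiv ℝ).comp_left
        (g := fun L : EuclideanSpace ℝ (Fin 2) →L[ℝ] ℂ => ‖L‖ ^ 2) (by simp))
  · have hL : Continuous fun x : EuclideanSpace ℝ (Fin 2) => ‖x‖ ^ 2 * ‖u x‖ ^ 2 :=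
      (continuous_norm.pow 2).mul (hc.norm.pow 2)
    have hs2 : HasCompactSupport fun x => ‖u x‖ ^ 2 :=
      hs.comp_left (g := fun w : ℂ => ‖w‖ ^ 2) (by simp)
    exact hL.integrable_of_hasCompactSupport hs2.mul_left

theorem exists_inSigma_ne_zero {p q : ℝ} (hp : 0 < p) (hq : 0 < q) :
    ∃ u, InSigma p q u ∧ u ≠ 0 := by
  let f : ContDiffBump (0 : EuclideanSpace ℝ (Fin 2)) := ⟨1, 2, one_pos, one_lt_two⟩
  refine ⟨fun x => (f x : ℂ), HasCompactSupport.inSigma hp hq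
    (Complex.ofRealCLM.contDiff.comp f.contDiff)
    (f.hasCompactSupport.comp_left Complex.ofReal_zero), ?_⟩
  intro h
  have h0 := congrFun h 0
  simp [f.one_of_mem_closedBall (Metric.mem_closedBall_self zero_le_one)] at h0

theorem rpow_le_rpow_add_rpow {t a p b : ℝ} (ht : 0 ≤ t) (ha : 0 ≤ a) (hap : a ≤ p)
    (hpb : p ≤ b) : t ^ p ≤ t ^ a + t ^ b := by
  rcases le_total t 1 with h1 | h1
  · linarith [Real.rpow_le_rpow_of_exponent_ge' ht h1 ha hap, Real.rpow_nonneg ht b]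
  · linarith [Real.rpow_le_rpow_of_exponent_le h1 hpb, Real.rpow_nonneg ht a]

theorem integral_norm_rpow_pos {X E : Type*} [TopologicalSpace X] [MeasurableSpace X]
    {μ : Measure X} [μ.IsOpenPosMeasure] [NormedAddCommGroup E] {u : X → E} {p : ℝ}
    (hu : Continuous u) (hu0 : u ≠ 0) (hi : Integrable (fun x => ‖u x‖ ^ p) μ) :
    0 < ∫ x, ‖u x‖ ^ p ∂μ := by
  rw [integral_pos_iff_support_of_nonneg (fun x => by positivity) hi]
  obtain ⟨x₀, hx₀⟩ := Function.ne_iff.mp hu0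
  refine ((isOpen_ne_fun hu continuous_const).measure_pos μ ⟨x₀, hx₀⟩).trans_le
    (measure_mono fun x hx => ?_)
  exact (Real.rpow_pos_of_pos (norm_pos_iff.mpr hx) p).ne'

theorem div_le_muS {p q S : ℝ} (hp : 2 < p) (hpq : p < q) (hS : S ≤ 0)
    {u : EuclideanSpace ℝ (Fin 2) → ℂ} (hu : InSigma p q u) (hu0 : u ≠ 0) :
    p / q ≤ muS p q S u := by
  obtain ⟨hd, hmem, hT, hL, hA, hB⟩ := hu
  have hu2 : Integrable fun x => ‖u x‖ ^ 2 := hmem.integrable_norm_pow two_ne_zero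
  have hA_pos : 0 < Afun p u := integral_norm_rpow_pos hd.continuous hu0 hA
  have hA_le : Afun p u ≤ (∫ x, ‖u x‖ ^ 2) + Bfun q u := by
    rw [Afun, Bfun, ← integral_add hu2 hB]
    refine integral_mono hA (hu2.add hB) fun x => ?_
    simpa [Real.rpow_two] using rpow_le_rpow_add_rpow (norm_nonneg (u x)) zero_le_two hp.le hpq.le
  have hL2 : ∫ x, ‖u x‖ ^ 2 ≤ 2 * (√(Tfun u - 2 * S) * √(Lfun u)) :=
    calc ∫ x, ‖u x‖ ^ 2 ≤ 2 * (√(Lfun u) * √(Tfun u)) :=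
          integral_norm_sq_le_two_mul_sqrt_mul_sqrt hd hu2 hL hT
      _ ≤ 2 * (√(Tfun u - 2 * S) * √(Lfun u)) := by
          rw [mul_comm (√(Lfun u))]
          gcongr
          linarith
  have hq : 0 < q := by linarith
  have hqX : 2 * (√(Tfun u - 2 * S) * √(Lfun u)) ≤ q * (√(Tfun u - 2 * S) * √(Lfun u)) := by
    gcongr
    linarith
  rw [muS, le_div_iff₀ (by positivity)]
  calc p / q * (1 / p * Afun p u) = Afun p u / q := by field_simp
    _ ≤ (q * (√(Tfun u - 2 * S) * √(Lfun u)) + Bfun q u) / q := by gcongr; linarith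
    _ = √(Tfun u - 2 * S) * √(Lfun u) + 1 / q * Bfun q u := by field_simp

/-- for `N = 2`, `2 < p < q < ∞`, and `S ≤ 0`, the extreme value
`μ̂^S = inf { μ^S(u) : u ∈ Σ \ {0} }` is strictly positive. -/
theorem stmt8 (p q S : ℝ) (hp : 2 < p) (hpq : p < q) (hS : S ≤ 0) :
    0 < sInf { m : ℝ | ∃ u : EuclideanSpace ℝ (Fin 2) → ℂ,
      InSigma p q u ∧ u ≠ 0 ∧ m = muS p q S u } := by
  obtain ⟨u, hu, hu0⟩ := exists_inSigma_ne_zero (p := p) (q := q) (by linarith) (by linarith)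
  refine (div_pos (by linarith : 0 < p) (by linarith : 0 < q)).trans_le
    (le_csInf ⟨_, u, hu, hu0, rfl⟩ ?_)
  rintro m ⟨u, hu, hu0, rfl⟩
  exact div_le_muS hp hpq hS hu hu0
end

section
/- (No standing waves of large action, N=2) If u ∈ Σ\{0} is a weak solution of -Δu + |x|²u + λu - μ|u|^{p-2}u + |u|^{q-2}u = 0 in ℝ² satisfying the Pohozaev identity, then its action S := S_{λ,μ}(u) satisfies S < T(u)/2, where T(u) = ∫|∇u|². -/
/-- no standing waves of large action, N = 2: if `u ≠ 0` is a
weak solution in 2D (so `L(u) > 0`) satisfying the Pohozaev identity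
`2L + 2λQ - (2μ/p)A + (2/q)B = 0`, then its action
`S = ½T + ½L + λQ - (μ/p)A + (1/q)B` satisfies `S < T/2`. -/
theorem stmt13 (p q μ lam T L Q A B S : ℝ) (hp : 2 < p) (hpq : p < q)
    (hμ : 0 < μ) (hL : 0 < L)
    (hPoh : 2 * L + 2 * lam * Q - (2 * μ / p) * A + (2 / q) * B = 0)
    (hS : S = T / 2 + L / 2 + lam * Q - (μ / p) * A + (1 / q) * B) :
    S < T / 2 := by
  have h1 : 2 * μ / p * A = 2 * (μ / p * A) := by ring
  have h2 : (2 / q) * B = 2 * (1 / q * B) := by ring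
  linarith
end

section
/- Let N = 2, 2 < p < q < ∞, S ∈ ℝ, μ ≥ μ̂^S. Then the fundamental frequency λ̂^S_μ = sup{ λ^S_μ(u) : u ∈ Σ\{0}, T(u) ≥ 2S } is finite, where λ^S_μ(u) = -((T(u)-2S)^{1/2}L(u)^{1/2} - (μ/p)A(u) + (1/q)B(u))/Q(u). (Key step: along any sequence (u_n) normalized by ‖u_n‖_{L²}² = 1, λ^S_μ(u_n) ≤ C₁‖u_n‖_{L^q}^{θq} - (1/q)‖u_n‖_{L^q}^q with θ = q(p-2)/(p(q-2)) < 1, which is bounded above.) -/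
open MeasureTheory

noncomputable def Qfun (u : EuclideanSpace ℝ (Fin 2) → ℂ) : ℝ :=
  (1 / 2) * ∫ x : EuclideanSpace ℝ (Fin 2), ‖u x‖ ^ 2

noncomputable def lamS (p q μ S : ℝ) (u : EuclideanSpace ℝ (Fin 2) → ℂ) : ℝ :=
  -(Real.sqrt (Tfun u - 2 * S) * Real.sqrt (Lfun u)
      - (μ / p) * Afun p u + (1 / q) * Bfun q u) / Qfun u

/-! The bound is pointwise: for `2 < p < q` the intermediate power is dominated by the extreme
ones, `(μ / p) t ^ p ≤ C t ^ 2 + (1 / q) t ^ q` for all `t ≥ 0`, with `C` depending only on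
`μ, p, q`. Integrating this against `|u|` gives `(μ / p) A(u) ≤ 2 C Q(u) + (1 / q) B(u)`, and since
the kinetic term `√(T(u) - 2S) √(L(u))` is nonnegative, `λ^S_μ(u) ≤ 2 C` for every admissible `u`. -/

namespace Real

/-- Splitting at `t = R`: below `R` the factor `t ^ (p - r)` is at most `R ^ (p - r)`, above `R`
the factor `t ^ (p - q)` is at most `R ^ (p - q)`. -/
lemma rpow_le_rpow_mul_rpow_add_rpow_mul_rpow {r p q t R : ℝ} (hr : 0 < r) (hrp : r ≤ p)
    (hpq : p ≤ q) (ht : 0 ≤ t) (hR : 0 < R) :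
    t ^ p ≤ R ^ (p - r) * t ^ r + R ^ (p - q) * t ^ q := by
  rcases le_or_gt t R with htR | hRt
  · have hsplit : t ^ p = t ^ (p - r) * t ^ r := by
      rw [← rpow_add' ht (by linarith)]; ring_nf
    have hlow : t ^ p ≤ R ^ (p - r) * t ^ r := by
      rw [hsplit]
      gcongr
    have : 0 ≤ R ^ (p - q) * t ^ q := by positivity
    linarith
  · have htpos : 0 < t := hR.trans hRt
    have hhigh : t ^ p ≤ R ^ (p - q) * t ^ q := by
      calc t ^ p = t ^ (p - q) * t ^ q := by rw [← rpow_add htpos]; ring_nf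
        _ ≤ R ^ (p - q) * t ^ q :=
          mul_le_mul_of_nonneg_right (rpow_le_rpow_of_nonpos hR hRt.le (by linarith))
            (by positivity)
    have : 0 ≤ R ^ (p - r) * t ^ r := by positivity
    linarith

lemma exists_mul_rpow_le_mul_rpow_add_mul_rpow {r p q : ℝ} (hr : 0 < r) (hrp : r ≤ p)
    (hpq : p < q) (a : ℝ) {b : ℝ} (hb : 0 < b) :
    ∃ C : ℝ, ∀ t : ℝ, 0 ≤ t → a * t ^ p ≤ C * t ^ r + b * t ^ q := by
  set R := (b / (|a| + 1)) ^ (p - q)⁻¹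
  have hR : 0 < R := by positivity
  have hRpq : R ^ (p - q) = b / (|a| + 1) := rpow_inv_rpow (by positivity) (by linarith)
  have hcoeff : |a| * R ^ (p - q) ≤ b := by
    rw [hRpq, mul_div_assoc', div_le_iff₀ (by positivity)]
    nlinarith [abs_nonneg a]
  refine ⟨|a| * R ^ (p - r), fun t ht => ?_⟩
  have hsplit := rpow_le_rpow_mul_rpow_add_rpow_mul_rpow hr hrp hpq.le ht hR
  calc a * t ^ p ≤ |a| * t ^ p := by gcongr; exact le_abs_self a
    _ ≤ |a| * (R ^ (p - r) * t ^ r + R ^ (p - q) * t ^ q) := by gcongr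
    _ = |a| * R ^ (p - r) * t ^ r + (|a| * R ^ (p - q)) * t ^ q := by ring
    _ ≤ |a| * R ^ (p - r) * t ^ r + b * t ^ q := by gcongr

end Real

lemma Qfun_pos {p q : ℝ} {u : EuclideanSpace ℝ (Fin 2) → ℂ} (hu : InSigma p q u) (hu0 : u ≠ 0) :
    0 < Qfun u := by
  obtain ⟨x, hx⟩ : ∃ x, u x ≠ 0 := by
    by_contra! h
    exact hu0 (funext h)
  have hint : 0 < ∫ x : EuclideanSpace ℝ (Fin 2), ‖u x‖ ^ 2 :=
    integral_pos_of_integrable_nonneg_nonzero (x := x) (hu.1.continuous.norm.pow 2)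
      hu.2.1.norm.integrable_sq (fun _ => by positivity) (by simpa using hx)
  unfold Qfun
  exact mul_pos one_half_pos hint

theorem stmt15_general (p q S μ : ℝ) (hp : 2 < p) (hpq : p < q) :
    BddAbove { l : ℝ | ∃ u : EuclideanSpace ℝ (Fin 2) → ℂ,
      InSigma p q u ∧ u ≠ 0 ∧ 2 * S ≤ Tfun u ∧ l = lamS p q μ S u } := by
  obtain ⟨C, hC⟩ := Real.exists_mul_rpow_le_mul_rpow_add_mul_rpow two_pos hp.le hpq (μ / p)
    (one_div_pos.mpr (by linarith : 0 < q))
  refine ⟨2 * C, ?_⟩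
  rintro _ ⟨u, hu, hu0, -, rfl⟩
  have hsq : Integrable (fun x => ‖u x‖ ^ 2) := hu.2.1.norm.integrable_sq
  have hAB : (μ / p) * Afun p u ≤ 2 * C * Qfun u + (1 / q) * Bfun q u := by
    have := integral_mono (g := fun x => C * ‖u x‖ ^ 2 + 1 / q * ‖u x‖ ^ q)
      (hu.2.2.2.2.1.const_mul (μ / p)) ((hsq.const_mul C).add (hu.2.2.2.2.2.const_mul _))
      fun x => by simpa using hC ‖u x‖ (norm_nonneg _)
    rw [integral_add (hsq.const_mul C) (hu.2.2.2.2.2.const_mul _)] at this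
    simp only [integral_const_mul] at this
    unfold Afun Bfun Qfun
    linarith
  have hkin : 0 ≤ Real.sqrt (Tfun u - 2 * S) * Real.sqrt (Lfun u) := by positivity
  unfold lamS
  rw [div_le_iff₀ (Qfun_pos hu hu0)]
  linarith

/-- for `N = 2`, `2 < p < q < ∞`, `S ∈ ℝ` and `μ ≥ μ̂^S`, the
fundamental frequency `λ̂^S_μ = sup { λ^S_μ(u) : u ∈ Σ\{0}, T(u) ≥ 2S }` is
finite, i.e. the set of values is bounded above. -/
theorem stmt15 (p q S μ : ℝ) (hp : 2 < p) (hpq : p < q)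
    (hμ : sInf { m : ℝ | ∃ u : EuclideanSpace ℝ (Fin 2) → ℂ,
        InSigma p q u ∧ u ≠ 0 ∧ m = muS p q S u } ≤ μ) :
    BddAbove { l : ℝ | ∃ u : EuclideanSpace ℝ (Fin 2) → ℂ,
      InSigma p q u ∧ u ≠ 0 ∧ 2 * S ≤ Tfun u ∧ l = lamS p q μ S u } :=
  stmt15_general p q S μ hp hpq
end

section
/- (Monotonicity of fundamental frequency, quantitative) Let μ > 0 and S₁ < S₂ with |S₂-S₁| small. Suppose û₁ maximizes Λ^{S₁}_μ and û₂ maximizes Λ^{S₂}_μ over the respective admissible sets, with T(û₁) > 2S₂ and T(û₂) > 2S₁. Then (S₂-S₁)/Q(û₁) ≤ λ̂^{S₂}_μ - λ̂^{S₁}_μ ≤ (S₂-S₁)/Q(û₂), using the identity Λ^{S₁}_μ(w) = Λ^{S₂}_μ(w) - (S₂-S₁)/Q(w). -/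
/-- quantitative monotonicity of the fundamental frequency:
with `Λ^S_μ(u) = (S - ½T(u) - ½L(u) + (μ/p)A(u) - (1/q)B(u))/Q(u)`, `Q > 0`,
if `v₁` maximizes `Λ^{S₁}_μ` over `{T ≥ 2S₁}` and `v₂` maximizes `Λ^{S₂}_μ`
over `{T ≥ 2S₂}`, with `T(v₁) > 2S₂` and `T(v₂) > 2S₁`, then
`(S₂-S₁)/Q(v₁) ≤ λ̂^{S₂}_μ - λ̂^{S₁}_μ ≤ (S₂-S₁)/Q(v₂)`. -/
theorem stmt17 {α : Type*} (p q μ S₁ S₂ : ℝ) (hμ : 0 < μ) (hS : S₁ < S₂)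
    (T L Q A B : α → ℝ) (hQ : ∀ u, 0 < Q u)
    (Λ : ℝ → α → ℝ)
    (hΛ : ∀ S u, Λ S u
      = (S - T u / 2 - L u / 2 + (μ / p) * A u - (1 / q) * B u) / Q u)
    (v₁ v₂ : α)
    (h₁mem : 2 * S₁ ≤ T v₁) (h₂mem : 2 * S₂ ≤ T v₂)
    (h₁max : ∀ w, 2 * S₁ ≤ T w → Λ S₁ w ≤ Λ S₁ v₁)
    (h₂max : ∀ w, 2 * S₂ ≤ T w → Λ S₂ w ≤ Λ S₂ v₂)
    (hT₁ : 2 * S₂ < T v₁) (hT₂ : 2 * S₁ < T v₂) :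
    (S₂ - S₁) / Q v₁ ≤ Λ S₂ v₂ - Λ S₁ v₁ ∧
    Λ S₂ v₂ - Λ S₁ v₁ ≤ (S₂ - S₁) / Q v₂ := by
  have key : ∀ u, Λ S₂ u - Λ S₁ u = (S₂ - S₁) / Q u := by
    intro u
    rw [hΛ, hΛ, div_sub_div_same]
    ring_nf
  constructor
  · have h := h₂max v₁ hT₁.le
    have := key v₁
    linarith
  · have h := h₁max v₂ hT₂.le
    have := key v₂
    linarith
end
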